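/- The baker's map propagator F := S∘(L + X^{−1}∘R)∘(E_p + Y^{−1/2}∘O_p) is a unitary operator on L²(ℝ). -/

import Mathlib

/-!
Each of the three factors is unitary. `L + X^{-1} R` is multiplication by
`χ_l + e^{-ix/ħ} χ_r`, a function of modulus one because `χ_l` and `χ_r` are complementary
indicators. The Fourier transform turns the translation `Y^s` into multiplication by
`e^{isp/ħ}`: on integrable functions this is a change of variables in the integral formula, and
both sides are continuous, so it extends by density. Hence `𝓕_ħ (E_p + Y^{-1/2} O_p) 𝓕_ħ⁻¹` is
multiplication by the unimodular function `χ_e + e^{-ip/2ħ} χ_o`. Finally `S` is the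
`L²`-normalised dilation by `2`. Multiplication by a unimodular function and normalised dilations
are linear isometric equivalences of `L^p`, and so is their composite.
-/

open MeasureTheory Filter Topology

noncomputable section

/-- The Hilbert space `L²(ℝ, ℂ)` with inner product `⟪f,g⟫ = ∫ conj(f x) · g x dx`. -/
abbrev HL2 : Type := MeasureTheory.Lp ℂ 2 (MeasureTheory.volume : MeasureTheory.Measure ℝ)

/-- Indicator of `⋃ₖ [k, k+1/2)`. -/
def chiL (x : ℝ) : ℂ := if Int.fract x < 1/2 then 1 else 0

/-- Indicator of `⋃ₖ [k+1/2, k+1)`. -/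
def chiR (x : ℝ) : ℂ := if 1/2 ≤ Int.fract x then 1 else 0

/-- Indicator of `⋃ₖ [2k, 2k+1)`. -/
def chiE (p : ℝ) : ℂ := if Even ⌊p⌋ then 1 else 0

/-- Indicator of `⋃ₖ [2k+1, 2k+2)`. -/
def chiO (p : ℝ) : ℂ := if Odd ⌊p⌋ then 1 else 0

/-- The `hbar`-scaled Fourier integral formula `(2πhbar)^{−1/2} ∫ e^{−ipx/hbar} f(x) dx`. -/
def fourierFormula (hbar : ℝ) (f : ℝ → ℂ) (p : ℝ) : ℂ :=
  ((Real.sqrt (2 * Real.pi * hbar) : ℝ) : ℂ)⁻¹ *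
    ∫ x : ℝ, Complex.exp (-(Complex.I * (p : ℂ) * (x : ℂ) / (hbar : ℂ))) * f x

open scoped ENNReal ComplexConjugate

namespace MeasureTheory.Lp

section UnimodularSMul

variable {α 𝕜 E : Type*} [MeasurableSpace α] {μ : Measure α} {p : ℝ≥0∞} [Fact (1 ≤ p)]
  [RCLike 𝕜] [NormedAddCommGroup E] [NormedSpace 𝕜 E] {m m' : α → 𝕜}

omit [Fact (1 ≤ p)] in
theorem memLp_smul_of_norm_eq_one (hm : AEStronglyMeasurable m μ) (hm1 : ∀ x, ‖m x‖ = 1)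
    (f : Lp E p μ) : MemLp (fun x => m x • f x) p μ :=
  (Lp.memLp f).of_le (hm.smul (Lp.aestronglyMeasurable f))
    (Eventually.of_forall fun x => by rw [norm_smul, hm1, one_mul])

def smulUnimodularₗᵢ (hm : AEStronglyMeasurable m μ) (hm1 : ∀ x, ‖m x‖ = 1) :
    Lp E p μ →ₗᵢ[𝕜] Lp E p μ where
  toFun f := (memLp_smul_of_norm_eq_one hm hm1 f).toLp
  map_add' f g := by
    rw [← MemLp.toLp_add]
    refine MemLp.toLp_congr _ _ ?_
    filter_upwards [Lp.coeFn_add f g] with x hx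
    simp only [hx, Pi.add_apply, smul_add]
  map_smul' c f := by
    rw [RingHom.id_apply, ← MemLp.toLp_const_smul]
    refine MemLp.toLp_congr _ _ ?_
    filter_upwards [Lp.coeFn_smul c f] with x hx
    simp only [hx, Pi.smul_apply, smul_comm (m x) c]
  norm_map' f := by
    change ‖(memLp_smul_of_norm_eq_one hm hm1 f).toLp‖ = ‖f‖
    rw [Lp.norm_toLp, Lp.norm_def]
    congr 1
    exact eLpNorm_congr_norm_ae (Eventually.of_forall fun x => by rw [norm_smul, hm1, one_mul])

theorem coeFn_smulUnimodularₗᵢ (hm : AEStronglyMeasurable m μ) (hm1 : ∀ x, ‖m x‖ = 1)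
    (f : Lp E p μ) : smulUnimodularₗᵢ hm hm1 f =ᵐ[μ] fun x => m x • f x :=
  MemLp.coeFn_toLp (memLp_smul_of_norm_eq_one hm hm1 f)

theorem smulUnimodularₗᵢ_smulUnimodularₗᵢ (hm : AEStronglyMeasurable m μ)
    (hm1 : ∀ x, ‖m x‖ = 1) (hm' : AEStronglyMeasurable m' μ) (hm1' : ∀ x, ‖m' x‖ = 1)
    (hinv : ∀ x, m' x * m x = 1) (f : Lp E p μ) :
    smulUnimodularₗᵢ hm' hm1' (smulUnimodularₗᵢ hm hm1 f) = f := by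
  ext1
  filter_upwards [coeFn_smulUnimodularₗᵢ hm' hm1' (smulUnimodularₗᵢ hm hm1 f),
    coeFn_smulUnimodularₗᵢ hm hm1 f] with x hx hx'
  rw [hx, hx', smul_smul, hinv, one_smul]

def smulUnimodular (hm : AEStronglyMeasurable m μ) (hm1 : ∀ x, ‖m x‖ = 1) :
    Lp E p μ ≃ₗᵢ[𝕜] Lp E p μ :=
  have hmc : AEStronglyMeasurable (fun x => conj (m x)) μ :=
    RCLike.continuous_conj.comp_aestronglyMeasurable hm
  have hmc1 : ∀ x, ‖conj (m x)‖ = 1 := fun x => (RCLike.norm_conj _).trans (hm1 x)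
  { smulUnimodularₗᵢ hm hm1 with
    invFun := smulUnimodularₗᵢ hmc hmc1
    left_inv := smulUnimodularₗᵢ_smulUnimodularₗᵢ hm hm1 hmc hmc1 fun x => by
      rw [RCLike.conj_mul, hm1, RCLike.ofReal_one, one_pow]
    right_inv := smulUnimodularₗᵢ_smulUnimodularₗᵢ hmc hmc1 hm hm1 fun x => by
      rw [RCLike.mul_conj, hm1, RCLike.ofReal_one, one_pow] }

theorem coeFn_smulUnimodular (hm : AEStronglyMeasurable m μ) (hm1 : ∀ x, ‖m x‖ = 1)
    (f : Lp E p μ) : smulUnimodular hm hm1 f =ᵐ[μ] fun x => m x • f x :=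
  coeFn_smulUnimodularₗᵢ hm hm1 f

end UnimodularSMul

section MultiplicationOperator

variable {α 𝕜 E : Type*} [MeasurableSpace α] {μ : Measure α} {p : ℝ≥0∞} [Fact (1 ≤ p)]
  [RCLike 𝕜] [NormedAddCommGroup E] [NormedSpace 𝕜 E] {T T' : Lp E p μ →L[𝕜] Lp E p μ}
  {m m' : α → 𝕜}

def IsMultiplicationOperator (T : Lp E p μ →L[𝕜] Lp E p μ) (m : α → 𝕜) : Prop :=
  ∀ f, T f =ᵐ[μ] fun x => m x • f x

theorem IsMultiplicationOperator.add (hT : IsMultiplicationOperator T m)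
    (hT' : IsMultiplicationOperator T' m') : IsMultiplicationOperator (T + T') (m + m') := by
  intro f
  filter_upwards [Lp.coeFn_add (T f) (T' f), hT f, hT' f] with x hsum hx hx'
  rw [add_apply, hsum, Pi.add_apply, hx, hx', Pi.add_apply, add_smul]

theorem IsMultiplicationOperator.comp (hT : IsMultiplicationOperator T m)
    (hT' : IsMultiplicationOperator T' m') : IsMultiplicationOperator (T ∘L T') (m * m') := by
  intro f
  filter_upwards [hT (T' f), hT' f] with x hx hx'
  rw [ContinuousLinearMap.comp_apply, hx, hx', Pi.mul_apply, mul_smul]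

theorem IsMultiplicationOperator.apply_eq_smulUnimodular (hT : IsMultiplicationOperator T m)
    (hm : AEStronglyMeasurable m μ) (hm1 : ∀ x, ‖m x‖ = 1) (f : Lp E p μ) :
    T f = smulUnimodular hm hm1 f :=
  Lp.ext ((hT f).trans (coeFn_smulUnimodular hm hm1 f).symm)

end MultiplicationOperator

section Dilation

open Module

def dilationFactor (V : Type*) [AddCommGroup V] [Module ℝ V] (p : ℝ≥0∞) (r : ℝ) : ℝ :=
  |r ^ finrank ℝ V| ^ (-(1 / p).toReal)

variable {V 𝕜 E : Type*} [NormedAddCommGroup V] [NormedSpace ℝ V] [NormedField 𝕜]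
  [NormedAddCommGroup E] [NormedSpace ℝ E] [NormedSpace 𝕜 E] [SMulCommClass ℝ 𝕜 E] {p : ℝ≥0∞}

theorem enorm_dilationFactor_mul {r : ℝ} (hr : r ≠ 0) :
    ‖dilationFactor V p r‖ₑ * ENNReal.ofReal |r⁻¹ ^ finrank ℝ V|⁻¹ ^ (1 / p).toReal = 1 := by
  have ha : 0 < |r ^ finrank ℝ V| := abs_pos.2 (pow_ne_zero _ hr)
  rw [dilationFactor, inv_pow, abs_inv, inv_inv, Real.enorm_of_nonneg (by positivity),
    ENNReal.ofReal_rpow_of_nonneg ha.le ENNReal.toReal_nonneg, ← ENNReal.ofReal_mul (by positivity),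
    Real.rpow_neg ha.le, inv_mul_cancel₀ (by positivity), ENNReal.ofReal_one]

theorem dilationFactor_mul_dilationFactor {r s : ℝ} (hsr : s * r = 1) :
    dilationFactor V p s * dilationFactor V p r = 1 := by
  rw [dilationFactor, dilationFactor, ← Real.mul_rpow (abs_nonneg _) (abs_nonneg _), ← abs_mul,
    ← mul_pow, hsr, one_pow, abs_one, Real.one_rpow]

theorem dilationFactor_real_two (r : ℝ) : dilationFactor ℝ 2 r = (√|r|)⁻¹ := by
  rw [dilationFactor, finrank_self, pow_one, Real.rpow_neg (abs_nonneg r),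
    Real.sqrt_eq_rpow]
  norm_num

variable [MeasurableSpace V] [BorelSpace V] [FiniteDimensional ℝ V] {μ : Measure V}
  [μ.IsAddHaarMeasure]

omit [NormedSpace ℝ E] [NormedSpace 𝕜 E] [SMulCommClass ℝ 𝕜 E] in
theorem _root_.MeasureTheory.eLpNorm_comp_smul (hp : p ≠ ∞) {r : ℝ} (hr : r ≠ 0) {f : V → E}
    (hf : AEStronglyMeasurable f μ) :
    eLpNorm (fun x => f (r • x)) p μ
      = ENNReal.ofReal |r ^ finrank ℝ V|⁻¹ ^ (1 / p).toReal * eLpNorm f p μ := by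
  have hmap := Measure.map_addHaar_smul μ hr
  rw [abs_inv] at hmap
  rw [← smul_eq_mul, ← eLpNorm_smul_measure_of_ne_top hp, ← hmap, eLpNorm_map_measure]
  · rfl
  · rw [hmap]; exact hf.smul_measure _
  · exact (measurable_const_smul r).aemeasurable

theorem eLpNorm_dilation (hp : p ≠ ∞) {r : ℝ} (hr : r ≠ 0) {f : V → E}
    (hf : AEStronglyMeasurable f μ) :
    eLpNorm (fun x => dilationFactor V p r • f (r⁻¹ • x)) p μ = eLpNorm f p μ := by
  refine (eLpNorm_const_smul _ (fun x => f (r⁻¹ • x)) p μ).trans ?_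
  rw [eLpNorm_comp_smul hp (inv_ne_zero hr) hf, ← mul_assoc, enorm_dilationFactor_mul hr, one_mul]

theorem aestronglyMeasurable_dilation {r : ℝ} (hr : r ≠ 0) {f : V → E}
    (hf : AEStronglyMeasurable f μ) :
    AEStronglyMeasurable (fun x => dilationFactor V p r • f (r⁻¹ • x)) μ :=
  (hf.comp_quasiMeasurePreserving
    (Measure.quasiMeasurePreserving_smul μ (inv_ne_zero hr))).const_smul _

theorem memLp_dilation (hp : p ≠ ∞) {r : ℝ} (hr : r ≠ 0) (f : Lp E p μ) :
    MemLp (fun x => dilationFactor V p r • f (r⁻¹ • x)) p μ :=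
  ⟨aestronglyMeasurable_dilation hr (Lp.aestronglyMeasurable f),
    (eLpNorm_dilation hp hr (Lp.aestronglyMeasurable f)).trans_lt (Lp.eLpNorm_lt_top f)⟩

variable [Fact (1 ≤ p)]

variable (𝕜) in
def dilationₗᵢ (hp : p ≠ ∞) {r : ℝ} (hr : r ≠ 0) : Lp E p μ →ₗᵢ[𝕜] Lp E p μ where
  toFun f := (memLp_dilation hp hr f).toLp
  map_add' f g := by
    rw [← MemLp.toLp_add]
    refine MemLp.toLp_congr _ _ ?_
    filter_upwards [(Measure.quasiMeasurePreserving_smul μ (inv_ne_zero hr)).ae_eq_comp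
      (Lp.coeFn_add f g)] with x hx
    simp only [Function.comp_apply, Pi.add_apply] at hx
    simp only [hx, Pi.add_apply, smul_add]
  map_smul' c f := by
    rw [RingHom.id_apply, ← MemLp.toLp_const_smul]
    refine MemLp.toLp_congr _ _ ?_
    filter_upwards [(Measure.quasiMeasurePreserving_smul μ (inv_ne_zero hr)).ae_eq_comp
      (Lp.coeFn_smul c f)] with x hx
    simp only [Function.comp_apply, Pi.smul_apply] at hx
    simp only [hx, Pi.smul_apply, smul_comm (dilationFactor V p r) c]
  norm_map' f := by
    change ‖(memLp_dilation hp hr f).toLp‖ = ‖f‖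
    rw [Lp.norm_toLp, Lp.norm_def, eLpNorm_dilation hp hr (Lp.aestronglyMeasurable f)]

theorem coeFn_dilationₗᵢ (hp : p ≠ ∞) {r : ℝ} (hr : r ≠ 0) (f : Lp E p μ) :
    dilationₗᵢ 𝕜 hp hr f =ᵐ[μ] fun x => dilationFactor V p r • f (r⁻¹ • x) :=
  MemLp.coeFn_toLp (memLp_dilation hp hr f)

theorem dilationₗᵢ_dilationₗᵢ (hp : p ≠ ∞) {r s : ℝ} (hr : r ≠ 0) (hs : s ≠ 0) (hsr : s * r = 1)
    (f : Lp E p μ) : dilationₗᵢ 𝕜 hp hs (dilationₗᵢ 𝕜 hp hr f) = f := by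
  ext1
  filter_upwards [coeFn_dilationₗᵢ (𝕜 := 𝕜) hp hs (dilationₗᵢ 𝕜 hp hr f),
    (Measure.quasiMeasurePreserving_smul μ (inv_ne_zero hs)).ae_eq_comp
      (coeFn_dilationₗᵢ (𝕜 := 𝕜) hp hr f)] with x h1 h2
  simp only [Function.comp_apply] at h2
  rw [h1, h2, smul_smul, dilationFactor_mul_dilationFactor hsr, one_smul, smul_smul,
    ← mul_inv_rev, hsr, inv_one, one_smul]

variable (𝕜) in
def dilation (hp : p ≠ ∞) {r : ℝ} (hr : r ≠ 0) : Lp E p μ ≃ₗᵢ[𝕜] Lp E p μ :=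
  { dilationₗᵢ 𝕜 hp hr with
    invFun := dilationₗᵢ 𝕜 hp (inv_ne_zero hr)
    left_inv := dilationₗᵢ_dilationₗᵢ hp hr (inv_ne_zero hr) (inv_mul_cancel₀ hr)
    right_inv := dilationₗᵢ_dilationₗᵢ hp (inv_ne_zero hr) hr (mul_inv_cancel₀ hr) }

theorem coeFn_dilation (hp : p ≠ ∞) {r : ℝ} (hr : r ≠ 0) (f : Lp E p μ) :
    dilation 𝕜 hp hr f =ᵐ[μ] fun x => dilationFactor V p r • f (r⁻¹ • x) :=
  coeFn_dilationₗᵢ hp hr f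

end Dilation

section Density

variable {α E : Type*} [MeasurableSpace α] {μ : Measure α} {p : ℝ≥0∞} [Fact (1 ≤ p)]
  [NormedAddCommGroup E]

theorem eq_of_forall_integrable {X : Type*} [TopologicalSpace X] [T2Space X] (hp : p ≠ ∞)
    {F G : Lp E p μ → X} (hF : Continuous F) (hG : Continuous G)
    (hFG : ∀ f : Lp E p μ, Integrable f μ → F f = G f) : F = G := by
  refine (simpleFunc.denseRange hp).equalizer hF hG (funext fun f => hFG f ?_)
  have hp0 : p ≠ 0 := (zero_lt_one.trans_le Fact.out).ne'
  exact ((SimpleFunc.memLp_iff_integrable hp0 hp).1 (simpleFunc.memLp f)).congr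
    (simpleFunc.toSimpleFunc_eq_toFun f)

end Density

end MeasureTheory.Lp

theorem norm_exp_I_mul_div (s x hbar : ℝ) : ‖Complex.exp (Complex.I * s * x / hbar)‖ = 1 := by
  simp [Complex.norm_exp]

theorem norm_chiL_add_mul_chiR {u : ℂ} (hu : ‖u‖ = 1) (x : ℝ) : ‖chiL x + u * chiR x‖ = 1 := by
  unfold chiL chiR
  rcases lt_or_ge (Int.fract x) (1 / 2) with h | h
  · rw [if_pos h, if_neg h.not_ge]
    simp
  · rw [if_neg h.not_gt, if_pos h]
    simpa using hu

theorem norm_chiE_add_mul_chiO {u : ℂ} (hu : ‖u‖ = 1) (p : ℝ) : ‖chiE p + u * chiO p‖ = 1 := by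
  unfold chiE chiO
  rcases Int.even_or_odd ⌊p⌋ with h | h
  · simp [h, Int.not_odd_iff_even.2 h]
  · simp [h, Int.not_even_iff_odd.2 h, hu]

@[fun_prop]
theorem measurable_chiL : Measurable chiL :=
  Measurable.ite (measurableSet_lt measurable_fract measurable_const)
    measurable_const measurable_const

@[fun_prop]
theorem measurable_chiR : Measurable chiR :=
  Measurable.ite (measurableSet_le measurable_const measurable_fract)
    measurable_const measurable_const

@[fun_prop]
theorem measurable_chiE : Measurable chiE :=
  Measurable.ite (Int.measurable_floor (MeasurableSet.of_discrete (s := {n : ℤ | Even n})))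
    measurable_const measurable_const

@[fun_prop]
theorem measurable_chiO : Measurable chiO :=
  Measurable.ite (Int.measurable_floor (MeasurableSet.of_discrete (s := {n : ℤ | Odd n})))
    measurable_const measurable_const

theorem fourierFormula_congr_ae {hbar : ℝ} {f g : ℝ → ℂ} (hfg : f =ᵐ[volume] g) :
    fourierFormula hbar f = fourierFormula hbar g := by
  funext p
  rw [fourierFormula, fourierFormula, integral_congr_ae (hfg.mono fun x hx => by rw [hx])]

theorem fourierFormula_comp_add_right (hbar s : ℝ) (f : ℝ → ℂ) (p : ℝ) :
    fourierFormula hbar (fun x => f (x + s)) p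
      = Complex.exp (Complex.I * s * p / hbar) * fourierFormula hbar f p := by
  rw [fourierFormula, fourierFormula, mul_left_comm (Complex.exp _)]
  congr 1
  rw [← integral_const_mul, ← integral_add_right_eq_self (μ := volume) (fun x : ℝ =>
    Complex.exp (Complex.I * s * p / hbar) * (Complex.exp (-(Complex.I * p * x / hbar)) * f x)) s]
  congr 1 with x
  rw [← mul_assoc, ← Complex.exp_add]
  congr 2
  push_cast
  ring

def modulation (hbar s : ℝ) : HL2 ≃ₗᵢ[ℂ] HL2 :=
  Lp.smulUnimodular (m := fun x : ℝ => Complex.exp (Complex.I * s * x / hbar)) (by fun_prop)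
    (norm_exp_I_mul_div s · hbar)

theorem coeFn_modulation (hbar s : ℝ) (f : HL2) :
    modulation hbar s f =ᵐ[volume] fun x => Complex.exp (Complex.I * s * x / hbar) * f x :=
  Lp.coeFn_smulUnimodular _ _ f

theorem fourier_translation_eq_modulation {hbar : ℝ} {𝓕 : HL2 ≃ₗᵢ[ℂ] HL2}
    (h𝓕 : ∀ f : HL2, Integrable (⇑f) volume → ⇑(𝓕 f) =ᵐ[volume] fourierFormula hbar (⇑f))
    {s : ℝ} {Y : HL2 →L[ℂ] HL2} (hY : ∀ f : HL2, ⇑(Y f) =ᵐ[volume] fun x => f (x + s))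
    (f : HL2) : 𝓕 (Y f) = modulation hbar s (𝓕 f) := by
  refine congrFun (Lp.eq_of_forall_integrable ENNReal.ofNat_ne_top
    (𝓕.continuous.comp Y.continuous) ((modulation hbar s).continuous.comp 𝓕.continuous)
    fun g hg => Lp.ext ?_) f
  filter_upwards [h𝓕 (Y g) ((hg.comp_add_right s).congr (hY g).symm), h𝓕 g hg,
    coeFn_modulation hbar s (𝓕 g)] with p hYg hg' hM
  rw [Function.comp_apply, Function.comp_apply, hYg, hM, fourierFormula_congr_ae (hY g),
    fourierFormula_comp_add_right, hg']

theorem isMultiplicationOperator_conj_translation {hbar : ℝ} {𝓕 : HL2 ≃ₗᵢ[ℂ] HL2}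
    (h𝓕 : ∀ f : HL2, Integrable (⇑f) volume → ⇑(𝓕 f) =ᵐ[volume] fourierFormula hbar (⇑f))
    {s : ℝ} {Y : HL2 →L[ℂ] HL2} (hY : ∀ f : HL2, ⇑(Y f) =ᵐ[volume] fun x => f (x + s)) :
    Lp.IsMultiplicationOperator (𝓕.conjStarAlgEquiv Y)
      fun p : ℝ => Complex.exp (Complex.I * s * p / hbar) := by
  intro g
  rw [LinearIsometryEquiv.conjStarAlgEquiv_apply_apply, fourier_translation_eq_modulation h𝓕 hY,
    LinearIsometryEquiv.apply_symm_apply]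
  exact coeFn_modulation hbar s g

theorem isMultiplicationOperator_conj_of_coeFn {𝓕 : HL2 ≃ₗᵢ[ℂ] HL2} {T : HL2 →L[ℂ] HL2}
    {m : ℝ → ℂ} (hT : ∀ f : HL2, ⇑(𝓕 (T f)) =ᵐ[volume] fun p => m p * (𝓕 f) p) :
    Lp.IsMultiplicationOperator (𝓕.conjStarAlgEquiv T) m := by
  intro g
  simpa using hT (𝓕.symm g)

theorem apply_eq_dilation_two {S : HL2 →L[ℂ] HL2}
    (hS : ∀ f : HL2, ⇑(S f) =ᵐ[volume] fun x => ((√2 : ℝ) : ℂ)⁻¹ * f (x / 2)) (f : HL2) :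
    S f = Lp.dilation ℂ ENNReal.ofNat_ne_top two_ne_zero f := by
  ext1
  filter_upwards [hS f, Lp.coeFn_dilation (𝕜 := ℂ) ENNReal.ofNat_ne_top two_ne_zero f]
    with x hSx hDx
  rw [hSx, hDx, Lp.dilationFactor_real_two, abs_two, Complex.real_smul, Complex.ofReal_inv,
    smul_eq_mul, div_eq_inv_mul x 2]

theorem bakerPropagator_unitary_general (hbar : ℝ)
    (𝓕 : HL2 ≃ₗᵢ[ℂ] HL2)
    (h𝓕 : ∀ f : HL2, Integrable (⇑f) volume → ⇑(𝓕 f) =ᵐ[volume] fourierFormula hbar (⇑f))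
    (L R Ep Op S : HL2 →L[ℂ] HL2) (X Y : ℝ → HL2 →L[ℂ] HL2)
    (hL : ∀ f : HL2, ⇑(L f) =ᵐ[volume] fun x => chiL x * f x)
    (hR : ∀ f : HL2, ⇑(R f) =ᵐ[volume] fun x => chiR x * f x)
    (hEp : ∀ f : HL2, ⇑(𝓕 (Ep f)) =ᵐ[volume] fun p => chiE p * (𝓕 f) p)
    (hOp : ∀ f : HL2, ⇑(𝓕 (Op f)) =ᵐ[volume] fun p => chiO p * (𝓕 f) p)
    (hX : ∀ s : ℝ, ∀ f : HL2,
      ⇑(X s f) =ᵐ[volume] fun x => Complex.exp (Complex.I * s * x / hbar) * f x)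
    (hY : ∀ s : ℝ, ∀ f : HL2, ⇑(Y s f) =ᵐ[volume] fun x => f (x + s))
    (hS : ∀ f : HL2, ⇑(S f) =ᵐ[volume] fun x => ((Real.sqrt 2 : ℝ) : ℂ)⁻¹ * f (x / 2)) :
    ∃ e : HL2 ≃ₗᵢ[ℂ] HL2,
      ∀ f : HL2, e f = (S ∘L (L + X (-1) ∘L R) ∘L (Ep + Y (-(1/2)) ∘L Op)) f := by
  -- `hL`, `hR` and `hX s` already say that these are multiplication operators (`•` on `ℂ` is `*`).
  have hA : Lp.IsMultiplicationOperator (L + X (-1) ∘L R)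
      (chiL + (fun x : ℝ => Complex.exp (Complex.I * (-1 : ℝ) * x / hbar)) * chiR) :=
    Lp.IsMultiplicationOperator.add hL (.comp (hX (-1)) hR)
  have hB : Lp.IsMultiplicationOperator (𝓕.conjStarAlgEquiv (Ep + Y (-(1 / 2)) ∘L Op))
      (chiE + (fun p : ℝ => Complex.exp (Complex.I * (-(1 / 2) : ℝ) * p / hbar)) * chiO) := by
    rw [← ContinuousLinearMap.mul_def, map_add, map_mul]
    exact (isMultiplicationOperator_conj_of_coeFn hEp).add
      ((isMultiplicationOperator_conj_translation h𝓕 (hY _)).comp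
        (isMultiplicationOperator_conj_of_coeFn hOp))
  have hmA : AEStronglyMeasurable
      (chiL + (fun x : ℝ => Complex.exp (Complex.I * (-1 : ℝ) * x / hbar)) * chiR) := by
    fun_prop
  have hmB : AEStronglyMeasurable
      (chiE + (fun p : ℝ => Complex.exp (Complex.I * (-(1 / 2) : ℝ) * p / hbar)) * chiO) := by
    fun_prop
  have hmA1 (x : ℝ) := norm_chiL_add_mul_chiR (norm_exp_I_mul_div (-1) x hbar) x
  have hmB1 (p : ℝ) := norm_chiE_add_mul_chiO (norm_exp_I_mul_div (-(1 / 2)) p hbar) p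
  refine ⟨𝓕.trans ((Lp.smulUnimodular hmB hmB1).trans
    (𝓕.symm.trans ((Lp.smulUnimodular hmA hmA1).trans
      (Lp.dilation ℂ ENNReal.ofNat_ne_top two_ne_zero)))), fun f => ?_⟩
  have hBf : (Ep + Y (-(1 / 2)) ∘L Op) f = 𝓕.symm (Lp.smulUnimodular hmB hmB1 (𝓕 f)) := by
    rw [LinearIsometryEquiv.eq_symm_apply, ← hB.apply_eq_smulUnimodular,
      LinearIsometryEquiv.conjStarAlgEquiv_apply_apply, LinearIsometryEquiv.symm_apply_apply]
  rw [ContinuousLinearMap.comp_apply, ContinuousLinearMap.comp_apply, hBf,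
    hA.apply_eq_smulUnimodular hmA hmA1, apply_eq_dilation_two hS]
  rfl

/-- The baker's map propagator `F = S (L + X^{−1} R)(E_p + Y^{−1/2} O_p)` is a unitary
operator on `L²(ℝ)`: it agrees with a linear isometric equivalence of `L²(ℝ)`. -/
theorem bakerPropagator_unitary (hbar : ℝ) (hhb : 0 < hbar)
    (𝓕 : HL2 ≃ₗᵢ[ℂ] HL2)
    (h𝓕 : ∀ f : HL2, Integrable (⇑f) volume → ⇑(𝓕 f) =ᵐ[volume] fourierFormula hbar (⇑f))
    (L R Ep Op S : HL2 →L[ℂ] HL2) (X Y : ℝ → HL2 →L[ℂ] HL2)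
    (hL : ∀ f : HL2, ⇑(L f) =ᵐ[volume] fun x => chiL x * f x)
    (hR : ∀ f : HL2, ⇑(R f) =ᵐ[volume] fun x => chiR x * f x)
    (hEp : ∀ f : HL2, ⇑(𝓕 (Ep f)) =ᵐ[volume] fun p => chiE p * (𝓕 f) p)
    (hOp : ∀ f : HL2, ⇑(𝓕 (Op f)) =ᵐ[volume] fun p => chiO p * (𝓕 f) p)
    (hX : ∀ s : ℝ, ∀ f : HL2,
      ⇑(X s f) =ᵐ[volume] fun x => Complex.exp (Complex.I * s * x / hbar) * f x)
    (hY : ∀ s : ℝ, ∀ f : HL2, ⇑(Y s f) =ᵐ[volume] fun x => f (x + s))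
    (hS : ∀ f : HL2, ⇑(S f) =ᵐ[volume] fun x => ((Real.sqrt 2 : ℝ) : ℂ)⁻¹ * f (x / 2)) :
    ∃ e : HL2 ≃ₗᵢ[ℂ] HL2,
      ∀ f : HL2, e f = (S ∘L (L + X (-1) ∘L R) ∘L (Ep + Y (-(1/2)) ∘L Op)) f :=
  bakerPropagator_unitary_general hbar 𝓕 h𝓕 L R Ep Op S X Y hL hR hEp hOp hX hY hS
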